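/- Let ⟨D₁, ≤₁, ⊥₁, ⊤₁, ∘₁⟩ and ⟨D₂, ≤₂, ⊥₂, ⊤₂, ∘₂⟩ be stable qualification domains, and let S = ((D₁ \ {⊥₁}) × (D₂ \ {⊥₂})) ∪ {(⊥₁,⊥₂)} be the carrier of the strict cartesian product. Then for all (d₁,d₂), (e₁,e₂), (e₁',e₂') ∈ S, writing ⟨a,b⟩ for the strict pair, one has (d₁ ∘₁ (first component of ⟨e₁ ⊓₁ e₁', e₂ ⊓₂ e₂'⟩), d₂ ∘₂ (second component of ⟨e₁ ⊓₁ e₁', e₂ ⊓₂ e₂'⟩)) = ⟨(d₁ ∘₁ e₁) ⊓₁ (d₁ ∘₁ e₁'), (d₂ ∘₂ e₂) ⊓₂ (d₂ ∘₂ e₂')⟩; that is, the componentwise attenuation on the strict product distributes over the strict-product meet given by strict pairs of componentwise meets. -/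

import Mathlib

/-!
By distributivity of each `∘ᵢ` over `⊓`, the right-hand side is the strict pair of
`(d₁ ∘₁ (e₁ ⊓ e₁'), d₂ ∘₂ (e₂ ⊓ e₂'))`. When `d₁, d₂ ≠ ⊥`, stability makes `dᵢ ∘ᵢ -` vanish exactly
at `⊥`, so it commutes with forming strict pairs; when `d = (⊥, ⊥)` both sides are `(⊥, ⊥)`.
-/

open scoped Classical

section StrictPair

variable {α β : Type*}

noncomputable def strictPair [Bot α] [Bot β] (a : α) (b : β) : α × β :=
  if a ≠ ⊥ ∧ b ≠ ⊥ then (a, b) else (⊥, ⊥)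

theorem strictPair_bot_left [Bot α] [Bot β] (b : β) : strictPair (⊥ : α) b = (⊥, ⊥) := by
  simp [strictPair]

theorem strictPair_map [Bot α] [Bot β] {f : α → α} {g : β → β}
    (hf : ∀ a, f a = ⊥ ↔ a = ⊥) (hg : ∀ b, g b = ⊥ ↔ b = ⊥) (a : α) (b : β) :
    (f (strictPair a b).1, g (strictPair a b).2) = strictPair (f a) (g b) := by
  by_cases h : a ≠ ⊥ ∧ b ≠ ⊥
  · simp [strictPair, h, hf, hg]
  · have hfg : ¬(f a ≠ ⊥ ∧ g b ≠ ⊥) := by simpa [hf, hg] using h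
    simp only [strictPair, if_neg h, if_neg hfg, (hf ⊥).2 rfl, (hg ⊥).2 rfl]

end StrictPair

theorem attenuation_eq_bot_iff {D : Type*} [Bot D] {att : D → D → D}
    (hbot : ∀ d : D, att d ⊥ = ⊥) (hstable : ∀ d e : D, d ≠ ⊥ → e ≠ ⊥ → att d e ≠ ⊥)
    {d : D} (hd : d ≠ ⊥) (e : D) : att d e = ⊥ ↔ e = ⊥ :=
  ⟨not_imp_not.mp (hstable d e hd), fun he => he ▸ hbot d⟩

theorem strictProduct_attenuation_distrib_general
    {D₁ D₂ : Type*} [Lattice D₁] [BoundedOrder D₁] [Lattice D₂] [BoundedOrder D₂]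
    (att₁ : D₁ → D₁ → D₁) (att₂ : D₂ → D₂ → D₂)
    (hcomm₁ : ∀ d e : D₁, att₁ d e = att₁ e d)
    (hbot₁ : ∀ d : D₁, att₁ d ⊥ = ⊥)
    (hdistr₁ : ∀ d e₁ e₂ : D₁, att₁ d (e₁ ⊓ e₂) = att₁ d e₁ ⊓ att₁ d e₂)
    (hcomm₂ : ∀ d e : D₂, att₂ d e = att₂ e d)
    (hbot₂ : ∀ d : D₂, att₂ d ⊥ = ⊥)
    (hdistr₂ : ∀ d e₁ e₂ : D₂, att₂ d (e₁ ⊓ e₂) = att₂ d e₁ ⊓ att₂ d e₂)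
    (hstable₁ : ∀ d e : D₁, d ≠ ⊥ → e ≠ ⊥ → att₁ d e ≠ ⊥)
    (hstable₂ : ∀ d e : D₂, d ≠ ⊥ → e ≠ ⊥ → att₂ d e ≠ ⊥)
    :
    let S : Set (D₁ × D₂) :=
      (({(⊥ : D₁)}ᶜ : Set D₁) ×ˢ ({(⊥ : D₂)}ᶜ : Set D₂)) ∪ {((⊥ : D₁), (⊥ : D₂))}
    let spair : D₁ → D₂ → D₁ × D₂ := fun a b =>
      if a ≠ ⊥ ∧ b ≠ ⊥ then (a, b) else ((⊥ : D₁), (⊥ : D₂))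
    ∀ d e e' : D₁ × D₂, d ∈ S → e ∈ S → e' ∈ S →
      ((att₁ d.1 (spair (e.1 ⊓ e'.1) (e.2 ⊓ e'.2)).1,
        att₂ d.2 (spair (e.1 ⊓ e'.1) (e.2 ⊓ e'.2)).2) : D₁ × D₂)
        = spair (att₁ d.1 e.1 ⊓ att₁ d.1 e'.1) (att₂ d.2 e.2 ⊓ att₂ d.2 e'.2) := by
  intro S spair d e e' hd _ _
  change (att₁ d.1 (strictPair _ _).1, att₂ d.2 (strictPair _ _).2) = strictPair _ _
  rw [← hdistr₁, ← hdistr₂]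
  rcases hd with ⟨hd₁, hd₂⟩ | rfl
  · exact strictPair_map (attenuation_eq_bot_iff hbot₁ hstable₁ hd₁)
      (attenuation_eq_bot_iff hbot₂ hstable₂ hd₂) _ _
  · simp only [hcomm₁ ⊥, hcomm₂ ⊥, hbot₁, hbot₂, strictPair_bot_left]

/-- In the strict cartesian product of two stable qualification
domains, componentwise attenuation distributes over the strict-product meet. -/
theorem strictProduct_attenuation_distrib
    {D₁ D₂ : Type*} [Lattice D₁] [BoundedOrder D₁] [Lattice D₂] [BoundedOrder D₂]
    (att₁ : D₁ → D₁ → D₁) (att₂ : D₂ → D₂ → D₂)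
    (hassoc₁ : ∀ d e f : D₁, att₁ (att₁ d e) f = att₁ d (att₁ e f))
    (hcomm₁ : ∀ d e : D₁, att₁ d e = att₁ e d)
    (hmono₁ : ∀ d d' e e' : D₁, d ≤ d' → e ≤ e' → att₁ d e ≤ att₁ d' e')
    (htop₁ : ∀ d : D₁, att₁ d ⊤ = d)
    (hbot₁ : ∀ d : D₁, att₁ d ⊥ = ⊥)
    (hle₁ : ∀ d e : D₁, att₁ d e ≤ e)
    (hdistr₁ : ∀ d e₁ e₂ : D₁, att₁ d (e₁ ⊓ e₂) = att₁ d e₁ ⊓ att₁ d e₂)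
    (hassoc₂ : ∀ d e f : D₂, att₂ (att₂ d e) f = att₂ d (att₂ e f))
    (hcomm₂ : ∀ d e : D₂, att₂ d e = att₂ e d)
    (hmono₂ : ∀ d d' e e' : D₂, d ≤ d' → e ≤ e' → att₂ d e ≤ att₂ d' e')
    (htop₂ : ∀ d : D₂, att₂ d ⊤ = d)
    (hbot₂ : ∀ d : D₂, att₂ d ⊥ = ⊥)
    (hle₂ : ∀ d e : D₂, att₂ d e ≤ e)
    (hdistr₂ : ∀ d e₁ e₂ : D₂, att₂ d (e₁ ⊓ e₂) = att₂ d e₁ ⊓ att₂ d e₂)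
    (hstable₁ : ∀ d e : D₁, d ≠ ⊥ → e ≠ ⊥ → att₁ d e ≠ ⊥)
    (hstable₂ : ∀ d e : D₂, d ≠ ⊥ → e ≠ ⊥ → att₂ d e ≠ ⊥)
    :
    let S : Set (D₁ × D₂) :=
      (({(⊥ : D₁)}ᶜ : Set D₁) ×ˢ ({(⊥ : D₂)}ᶜ : Set D₂)) ∪ {((⊥ : D₁), (⊥ : D₂))}
    let spair : D₁ → D₂ → D₁ × D₂ := fun a b =>
      if a ≠ ⊥ ∧ b ≠ ⊥ then (a, b) else ((⊥ : D₁), (⊥ : D₂))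
    ∀ d e e' : D₁ × D₂, d ∈ S → e ∈ S → e' ∈ S →
      ((att₁ d.1 (spair (e.1 ⊓ e'.1) (e.2 ⊓ e'.2)).1,
        att₂ d.2 (spair (e.1 ⊓ e'.1) (e.2 ⊓ e'.2)).2) : D₁ × D₂)
        = spair (att₁ d.1 e.1 ⊓ att₁ d.1 e'.1) (att₂ d.2 e.2 ⊓ att₂ d.2 e'.2) :=
  strictProduct_attenuation_distrib_general att₁ att₂ hcomm₁ hbot₁ hdistr₁ hcomm₂ hbot₂ hdistr₂
    hstable₁ hstable₂
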